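/- arXiv:2403.09082 — 2 statements merged into one kernel-verified Lean document; each statement's English description precedes it below -/
import Mathlib

section
/- For every integer k ≥ 1, g(S_k,C_3) < (k+1)!; that is, every edge-colored complete graph K_n with n ≥ (k+1)! that contains no monochromatic triangle must contain a rainbow star with k edges. -/
/-- An edge-coloring of `K_N` (on vertex set `Fin N`) has no monochromatic triangle. -/
def MonoC3Free (N : ℕ) (c : Fin N → Fin N → ℕ) : Prop :=
  ∀ u v w : Fin N, u ≠ v → v ≠ w → u ≠ w → ¬(c u v = c v w ∧ c u v = c u w)

/-- The edge-coloring `c` of `K_N` contains a rainbow star with `k` edges: a vertex `v`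
and `k` distinct neighbors joined to `v` by edges of pairwise distinct colors. -/
def HasRainbowStar (N k : ℕ) (c : Fin N → Fin N → ℕ) : Prop :=
  ∃ (v : Fin N) (f : Fin k → Fin N), Function.Injective f ∧ (∀ i, f i ≠ v) ∧
    ∀ i j : Fin k, i ≠ j → c v (f i) ≠ c v (f j)

/-- `g(S_k, C_3)`: the maximum `N` for which some edge-coloring of `K_N` contains
neither a rainbow `k`-star nor a monochromatic triangle. -/
noncomputable def gStarTriangle (k : ℕ) : ℕ :=
  sSup {N : ℕ | ∃ c : Fin N → Fin N → ℕ,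
    (∀ u v, c u v = c v u) ∧ MonoC3Free N c ∧ ¬HasRainbowStar N k c}

/-- If some vertex sees at least `k` distinct colors, there is a rainbow `k`-star. -/
lemma star_of_colors {n k : ℕ} (c : Fin n → Fin n → ℕ) (v : Fin n)
    (h : k ≤ ((Finset.univ.filter (· ≠ v)).image (c v)).card) :
    HasRainbowStar n k c := by
  obtain ⟨S, hS, hScard⟩ := Finset.exists_subset_card_eq h
  have hmem : ∀ i : Fin k, (S.orderEmbOfFin hScard i) ∈
      (Finset.univ.filter (· ≠ v)).image (c v) :=
    fun i => hS (S.orderEmbOfFin_mem hScard i)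
  have h1 : ∀ i : Fin k, ∃ u : Fin n, u ≠ v ∧ c v u = S.orderEmbOfFin hScard i := by
    intro i
    obtain ⟨u, hu1, hu2⟩ := Finset.mem_image.1 (hmem i)
    exact ⟨u, (Finset.mem_filter.1 hu1).2, hu2⟩
  choose g hg1 hg2 using h1
  refine ⟨v, g, ?_, hg1, ?_⟩
  · intro i j hij
    have : S.orderEmbOfFin hScard i = S.orderEmbOfFin hScard j := by
      rw [← hg2 i, ← hg2 j, hij]
    exact (S.orderEmbOfFin hScard).injective this
  · intro i j hij
    rw [hg2 i, hg2 j]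
    exact fun hc => hij ((S.orderEmbOfFin hScard).injective hc)

lemma main_star (k : ℕ) (hk : 1 ≤ k) :
    ∀ (n : ℕ) (c : Fin n → Fin n → ℕ), (k + 1).factorial ≤ n →
      (∀ u v, c u v = c v u) → MonoC3Free n c → HasRainbowStar n k c := by
  induction k with
  | zero => omega
  | succ m ih =>
    intro n c hn hsymm hfree
    by_contra hno
    -- no rainbow (m+1)-star, so every vertex sees at most m colors
    have hn2 : 2 ≤ n := le_trans (le_trans (by omega) (Nat.self_le_factorial (m + 2))) hn
    set v0 : Fin n := ⟨0, by omega⟩ with hv0def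
    have hcolors : ((Finset.univ.filter (· ≠ v0)).image (c v0)).card ≤ m := by
      by_contra hlt
      exact hno (star_of_colors c v0 (by omega))
    rcases Nat.eq_zero_or_pos m with hm0 | hm1
    · -- base case k = 1
      subst hm0
      apply hno
      refine ⟨v0, fun _ => ⟨1, by omega⟩, fun i j _ => Fin.ext (by omega),
        fun i => ?_, fun i j hij => absurd (Fin.ext (by omega)) hij⟩
      simp [hv0def, Fin.ext_iff]
    -- pigeonhole: some color class at v0 has at least (m+1)! vertices
    have hs_card : (Finset.univ.filter (· ≠ v0)).card = n - 1 := by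
      rw [Finset.filter_ne']
      simp [Finset.card_erase_of_mem]
    have hsne : (Finset.univ.filter (· ≠ v0)).Nonempty := by
      refine ⟨⟨1, by omega⟩, ?_⟩
      simp [hv0def, Fin.ext_iff]
    have htne : ((Finset.univ.filter (· ≠ v0)).image (c v0)).Nonempty :=
      hsne.image _
    have hmul : ((Finset.univ.filter (· ≠ v0)).image (c v0)).card * (m + 1).factorial
        ≤ (Finset.univ.filter (· ≠ v0)).card := by
      rw [hs_card]
      have h1 : ((Finset.univ.filter (· ≠ v0)).image (c v0)).card * (m + 1).factorial
          ≤ m * (m + 1).factorial := Nat.mul_le_mul_right _ hcolors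
      have h3 : 1 ≤ (m + 1).factorial := Nat.one_le_iff_ne_zero.2 (Nat.factorial_ne_zero _)
      have h4 : m * (m + 1).factorial + 1 ≤ (m + 1 + 1).factorial := by
        have h2 : (m + 1 + 1).factorial = (m + 2) * (m + 1).factorial := rfl
        rw [h2]; nlinarith
      omega
    obtain ⟨c0, _, hN⟩ := Finset.exists_le_card_fiber_of_mul_le_card_of_maps_to
      (fun a ha => Finset.mem_image_of_mem _ ha) htne hmul
    set N : Finset (Fin n) := (Finset.univ.filter (· ≠ v0)).filter (fun x => c v0 x = c0)
      with hNdef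
    have hNmem : ∀ x ∈ N, x ≠ v0 ∧ c v0 x = c0 := by
      intro x hx
      simp only [hNdef, Finset.mem_filter, Finset.mem_univ, true_and] at hx
      exact hx
    -- edges within N never have color c0
    have hNedge : ∀ x ∈ N, ∀ y ∈ N, x ≠ y → c x y ≠ c0 := by
      intro x hx y hy hxy hc
      obtain ⟨hx1, hx2⟩ := hNmem x hx
      obtain ⟨hy1, hy2⟩ := hNmem y hy
      exact hfree v0 x y (Ne.symm hx1) hxy (Ne.symm hy1)
        ⟨by rw [hx2, hc], by rw [hx2, hy2]⟩
    -- apply IH to the subgraph on N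
    set emb := N.orderEmbOfFin (rfl : N.card = N.card) with hembdef
    set c' : Fin N.card → Fin N.card → ℕ := fun i j => c (emb i) (emb j) with hc'def
    have hembmem : ∀ i, (emb i : Fin n) ∈ N := fun i => N.orderEmbOfFin_mem _ i
    have hc'free : MonoC3Free N.card c' := by
      intro u v w huv hvw huw
      exact hfree (emb u) (emb v) (emb w)
        (fun h => huv (emb.injective h)) (fun h => hvw (emb.injective h))
        (fun h => huw (emb.injective h))
    obtain ⟨u', f', hf'inj, hf'ne, hf'col⟩ :=
      ih hm1 N.card c' hN (fun u v => hsymm _ _) hc'free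
    -- build a rainbow (m+1)-star at emb u' in the original graph
    apply hno
    set u : Fin n := emb u' with hudef
    have huN : u ∈ N := hembmem u'
    have huv0 : u ≠ v0 := (hNmem u huN).1
    have hcu : c u v0 = c0 := by rw [hsymm]; exact (hNmem u huN).2
    refine ⟨u, Fin.cons v0 (fun i => emb (f' i)), ?_, ?_, ?_⟩
    · intro i j hij
      induction i using Fin.cases with
      | zero =>
        induction j using Fin.cases with
        | zero => rfl
        | succ j =>
          simp only [Fin.cons_zero, Fin.cons_succ] at hij
          exact absurd hij.symm (hNmem _ (hembmem (f' j))).1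
      | succ i =>
        induction j using Fin.cases with
        | zero =>
          simp only [Fin.cons_zero, Fin.cons_succ] at hij
          exact absurd hij (hNmem _ (hembmem (f' i))).1
        | succ j =>
          simp only [Fin.cons_succ] at hij
          rw [hf'inj (emb.injective hij)]
    · intro i
      induction i using Fin.cases with
      | zero => exact Ne.symm huv0
      | succ i =>
        simp only [Fin.cons_succ]
        exact fun h => hf'ne i (emb.injective h)
    · intro i j hij
      induction i using Fin.cases with
      | zero =>
        induction j using Fin.cases with
        | zero => exact absurd rfl hij
        | succ j =>
          simp only [Fin.cons_zero, Fin.cons_succ, hcu]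
          intro h
          exact hNedge u huN (emb (f' j)) (hembmem (f' j))
            (fun he => hf'ne j (emb.injective he.symm)) h.symm
      | succ i =>
        induction j using Fin.cases with
        | zero =>
          simp only [Fin.cons_zero, Fin.cons_succ, hcu]
          exact hNedge u huN (emb (f' i)) (hembmem (f' i))
            (fun he => hf'ne i (emb.injective he.symm))
        | succ j =>
          simp only [Fin.cons_succ]
          have : i ≠ j := fun h => hij (by rw [h])
          exact hf'col i j this

/-- For every `k ≥ 1`, `g(S_k, C_3) < (k+1)!`; that is, every
edge-colored `K_n` with `n ≥ (k+1)!` containing no monochromatic triangle must contain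
a rainbow star with `k` edges. -/
theorem gStarTriangle_lt_factorial (k : ℕ) (hk : 1 ≤ k) :
    gStarTriangle k < (k + 1).factorial ∧
    ∀ (n : ℕ) (c : Fin n → Fin n → ℕ), (k + 1).factorial ≤ n →
      (∀ u v, c u v = c v u) → MonoC3Free n c → HasRainbowStar n k c := by
  have hmain := main_star k hk
  refine ⟨?_, hmain⟩
  set S := {N : ℕ | ∃ c : Fin N → Fin N → ℕ,
    (∀ u v, c u v = c v u) ∧ MonoC3Free N c ∧ ¬HasRainbowStar N k c} with hSdef
  have hbound : ∀ N ∈ S, N < (k + 1).factorial := by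
    rintro N ⟨c, hsymm, hfree, hno⟩
    by_contra hge
    exact hno (hmain N c (by omega) hsymm hfree)
  rcases Set.eq_empty_or_nonempty S with hS | hS
  · rw [gStarTriangle, ← hSdef, hS, csSup_empty]
    simpa using Nat.factorial_pos (k + 1)
  · have hbdd : BddAbove S := ⟨(k + 1).factorial, fun N hN => le_of_lt (hbound N hN)⟩
    have := Nat.sSup_mem hS hbdd
    exact hbound _ this
end

section
/- Let H be a mono-C3-free edge-colored complete graph that contains no nice long bowtie, and suppose that for every vertex u of H there is exactly one color f(u) that appears more than once among the edges incident to u, and moreover f(u) appears on at least 5 edges incident to u. Then for every pair of distinct vertices u, v of H, col(uv) = f(u) or col(uv) = f(v). -/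
/-- An edge-coloring of a complete graph on vertex type `V` has no monochromatic
triangle. -/
def MonoC3Free' {V : Type*} (c : V → V → ℕ) : Prop :=
  ∀ u v w : V, u ≠ v → v ≠ w → u ≠ w → ¬(c u v = c v w ∧ c u v = c u w)

/-- The edge-colored complete graph contains a nice long bowtie: two disjoint triangles
`u₁u₂u₃` and `u₄u₅u₆` joined by the edge `u₃u₄`, such that deleting `{u₁, u₂}` or
`{u₅, u₆}` leaves a nice shovel.  Concretely: `u₁u₂` is a center edge of `u₁u₂u₃`,
`u₅u₆` is a center edge of `u₄u₅u₆`, and the color of `u₃u₄` differs from the colors of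
the triangle edges at `u₃` and from those at `u₄`. -/
def HasNiceLongBowtie {V : Type*} (c : V → V → ℕ) : Prop :=
  ∃ u₁ u₂ u₃ u₄ u₅ u₆ : V, List.Pairwise (· ≠ ·) [u₁, u₂, u₃, u₄, u₅, u₆] ∧
    c u₁ u₂ ≠ c u₃ u₁ ∧ c u₁ u₂ ≠ c u₃ u₂ ∧
    c u₃ u₄ ≠ c u₃ u₁ ∧ c u₃ u₄ ≠ c u₃ u₂ ∧
    c u₅ u₆ ≠ c u₄ u₅ ∧ c u₅ u₆ ≠ c u₄ u₆ ∧
    c u₃ u₄ ≠ c u₄ u₅ ∧ c u₃ u₄ ≠ c u₄ u₆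

/-- Let `H` be a mono-`C3`-free edge-colored complete graph containing
no nice long bowtie, and suppose that for every vertex `u` there is exactly one color
`f u` appearing more than once among the edges incident to `u`, and moreover `f u`
appears on at least `5` edges at `u`.  Then for every pair of distinct vertices `u, v`,
`col(uv) = f u` or `col(uv) = f v`. -/
theorem degenerate_coloring {V : Type*} [Fintype V] (c : V → V → ℕ)
    (hsym : ∀ u v, c u v = c v u) (hmono : MonoC3Free' c)
    (hnb : ¬HasNiceLongBowtie c)
    (f : V → ℕ)
    (hf5 : ∀ u : V, ∃ g : Fin 5 → V, Function.Injective g ∧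
      ∀ i, g i ≠ u ∧ c u (g i) = f u)
    (hfuniq : ∀ u x y : V, x ≠ y → x ≠ u → y ≠ u → c u x = c u y → c u x = f u) :
    ∀ u v : V, u ≠ v → c u v = f u ∨ c u v = f v := by
  classical
  intro u v huv
  by_contra hcon
  push_neg at hcon
  obtain ⟨h1, h2⟩ := hcon
  obtain ⟨g, hg, hgp⟩ := hf5 u
  obtain ⟨h, hh, hhp⟩ := hf5 v
  have hcardg : (Finset.univ.image g).card = 5 := by
    rw [Finset.card_image_of_injective _ hg, Finset.card_univ, Fintype.card_fin]
  have hcardh : (Finset.univ.image h).card = 5 := by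
    rw [Finset.card_image_of_injective _ hh, Finset.card_univ, Fintype.card_fin]
  -- pick u₁, u₂ from N(u) avoiding v
  have hScard : 1 < ((Finset.univ.image g) \ {v}).card := by
    have h1 := Finset.le_card_sdiff ({v} : Finset V) (Finset.univ.image g)
    have : ({v} : Finset V).card = 1 := Finset.card_singleton v
    omega
  obtain ⟨u₁, hu₁, u₂, hu₂, h12⟩ := Finset.one_lt_card.mp hScard
  simp only [Finset.mem_sdiff, Finset.mem_image, Finset.mem_univ, true_and,
    Finset.mem_singleton] at hu₁ hu₂
  obtain ⟨⟨i₁, hi₁⟩, hu₁v⟩ := hu₁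
  obtain ⟨⟨i₂, hi₂⟩, hu₂v⟩ := hu₂
  have hcu₁ : c u u₁ = f u := hi₁ ▸ (hgp i₁).2
  have hcu₂ : c u u₂ = f u := hi₂ ▸ (hgp i₂).2
  have hu₁u : u₁ ≠ u := hi₁ ▸ (hgp i₁).1
  have hu₂u : u₂ ≠ u := hi₂ ▸ (hgp i₂).1
  -- pick u₅, u₆ from N(v) avoiding u, u₁, u₂
  have hTcard : 1 < ((Finset.univ.image h) \ {u, u₁, u₂}).card := by
    have h1 := Finset.le_card_sdiff ({u, u₁, u₂} : Finset V) (Finset.univ.image h)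
    have h2 : ({u, u₁, u₂} : Finset V).card ≤ 3 := by
      apply le_trans (Finset.card_insert_le _ _)
      have := Finset.card_insert_le u₁ ({u₂} : Finset V)
      simp at this ⊢
      omega
    omega
  obtain ⟨u₅, hu₅, u₆, hu₆, h56⟩ := Finset.one_lt_card.mp hTcard
  simp only [Finset.mem_sdiff, Finset.mem_image, Finset.mem_univ, true_and,
    Finset.mem_insert, Finset.mem_singleton, not_or] at hu₅ hu₆
  obtain ⟨⟨j₅, hj₅⟩, hu₅u, hu₅u₁, hu₅u₂⟩ := hu₅
  obtain ⟨⟨j₆, hj₆⟩, hu₆u, hu₆u₁, hu₆u₂⟩ := hu₆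
  have hcv₅ : c v u₅ = f v := hj₅ ▸ (hhp j₅).2
  have hcv₆ : c v u₆ = f v := hj₆ ▸ (hhp j₆).2
  have hu₅v : u₅ ≠ v := hj₅ ▸ (hhp j₅).1
  have hu₆v : u₆ ≠ v := hj₆ ▸ (hhp j₆).1
  -- key color facts
  have hc12 : c u₁ u₂ ≠ f u := by
    intro hc
    exact hmono u u₁ u₂ (Ne.symm hu₁u) h12 (Ne.symm hu₂u)
      ⟨by rw [hcu₁, ← hc, hsym u₁ u₂], by rw [hcu₁, hcu₂]⟩
  have hc56 : c u₅ u₆ ≠ f v := by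
    intro hc
    exact hmono v u₅ u₆ (Ne.symm hu₅v) h56 (Ne.symm hu₆v)
      ⟨by rw [hcv₅, ← hc, hsym u₅ u₆], by rw [hcv₅, hcv₆]⟩
  apply hnb
  refine ⟨u₁, u₂, u, v, u₅, u₆, ?_, ?_, ?_, ?_, ?_, ?_, ?_, ?_, ?_⟩
  · refine .cons ?_ (.cons ?_ (.cons ?_ (.cons ?_ (.cons ?_ (.cons ?_ .nil))))) <;>
      intro a ha <;>
      simp only [List.mem_cons, List.mem_singleton, List.not_mem_nil, or_false] at ha
    · rcases ha with rfl|rfl|rfl|rfl|rfl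
      exacts [h12, hu₁u, hu₁v, fun e => hu₅u₁ e.symm, fun e => hu₆u₁ e.symm]
    · rcases ha with rfl|rfl|rfl|rfl
      exacts [hu₂u, hu₂v, fun e => hu₅u₂ e.symm, fun e => hu₆u₂ e.symm]
    · rcases ha with rfl|rfl|rfl
      exacts [huv, fun e => hu₅u e.symm, fun e => hu₆u e.symm]
    · rcases ha with rfl|rfl
      exacts [fun e => hu₅v e.symm, fun e => hu₆v e.symm]
    · exact ha ▸ h56
  · rw [hcu₁]; exact hc12
  · rw [hcu₂]; exact hc12
  · rw [hcu₁]; exact h1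
  · rw [hcu₂]; exact h1
  · rw [hcv₅]; exact hc56
  · rw [hcv₆]; exact hc56
  · rw [hcv₅]; exact h2
  · rw [hcv₆]; exact h2
end
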